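/- If a hidden path ⟨j_0,0⟩,...,⟨j_{m-1},m−1⟩ exists with respect to an active node ⟨i,m⟩ in a run with f actual crash failures, then the processes j_0,...,j_{m−1} are m pairwise-distinct faulty processes; consequently m ≤ f, so in protocol Opt_0 all decisions are made by time f+1 at the latest. -/

import Mathlib

attribute [local instance] Classical.propDecidable

/-- An adversary in the synchronous crash-failure model: an input vector of binary
initial values, a failure pattern given by the delivery relation `F` (`F m j i` means
the message sent by `j` at time `m` is delivered to `i` at time `m+1`, i.e. in round `m+1`),
and a crash round for each process (`⊤` meaning the process never crashes).
A process behaves correctly before its crashing round and sends nothing afterwards;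
during its crashing round it may send to an arbitrary subset. -/
structure Adversary (n : ℕ) where
  init : Fin n → Bool
  F : ℕ → Fin n → Fin n → Prop
  crash : Fin n → ℕ∞
  crash_pos : ∀ j, 1 ≤ crash j
  before_crash : ∀ (m : ℕ) (j i : Fin n), ((m + 1 : ℕ) : ℕ∞) < crash j → F m j i
  after_crash : ∀ (m : ℕ) (j i : Fin n), crash j < ((m + 1 : ℕ) : ℕ∞) → ¬ F m j i

namespace Adversary

variable {n : ℕ}

/-- A process is faulty if it crashes at some point. -/
def Faulty (A : Adversary n) (j : Fin n) : Prop := A.crash j ≠ ⊤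

/-- The number `f` of actual failures in the run determined by the adversary. -/
noncomputable def numFaults (A : Adversary n) : ℕ := {j | A.Faulty j}.ncard

/-- A process is active at time `m` if it has not crashed before time `m`. -/
def Active (A : Adversary n) (j : Fin n) (m : ℕ) : Prop := ((m : ℕ) : ℕ∞) < A.crash j

end Adversary

/-- `Seen A ⟨j,ℓ⟩ ⟨i,m⟩`: node `⟨j,ℓ⟩` is in the view (communication graph) of node
`⟨i,m⟩`, i.e. there is a message chain from `⟨j,ℓ⟩` to `⟨i,m⟩`. -/
inductive Seen {n : ℕ} (A : Adversary n) : Fin n × ℕ → Fin n × ℕ → Prop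
  | refl (p : Fin n × ℕ) : Seen A p p
  | self {p : Fin n × ℕ} {i : Fin n} {m : ℕ} : Seen A p (i, m) → Seen A p (i, m + 1)
  | step {p : Fin n × ℕ} {j i : Fin n} {m : ℕ} : Seen A p (j, m) → A.F m j i →
      Seen A p (i, m + 1)

open Adversary

/-- Two adversaries give process `i` the same view at time `m` in a full-information
protocol: the same nodes are seen, with the same initial values at seen time-0 nodes
and the same incoming edges at seen later nodes. -/
def sameView {n : ℕ} (A B : Adversary n) (i : Fin n) (m : ℕ) : Prop :=
  (∀ p, Seen A p (i, m) ↔ Seen B p (i, m)) ∧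
  (∀ j, Seen A (j, 0) (i, m) → A.init j = B.init j) ∧
  (∀ (k : ℕ) (j j' : Fin n), Seen A (j', k + 1) (i, m) → (A.F k j j' ↔ B.F k j j'))

/-- The local state of (active) process `i` at time `m` is the same under both
adversaries: `i` is active in both and has the same full-information view. -/
def sameLocal {n : ℕ} (A B : Adversary n) (i : Fin n) (m : ℕ) : Prop :=
  A.Active i m ∧ B.Active i m ∧ sameView A B i m

/-- The runs of the system are those generated by adversaries with at most `t` crashes. -/
def Valid {n : ℕ} (t : ℕ) (A : Adversary n) : Prop := A.numFaults ≤ t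

/-- Knowledge in the full-information protocol: `i` knows the fact `φ` at time `m`
iff `φ` holds at time `m` in every run (with at most `t` failures) in which `i` has
the same local state. -/
def Knows {n : ℕ} (t : ℕ) (φ : Adversary n → ℕ → Prop) (A : Adversary n) (i : Fin n)
    (m : ℕ) : Prop :=
  ∀ B : Adversary n, Valid t B → sameLocal A B i m → φ B m

/-- The fact `∃v`: some process has initial value `v`. -/
def existsVal {n : ℕ} (v : Bool) : Adversary n → ℕ → Prop := fun A _ => ∃ j, A.init j = v

/-- Node `⟨j',m'⟩` is revealed to `⟨i,m⟩`: either it is seen by `⟨i,m⟩`, or for some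
seen node `⟨i',m'⟩` the edge `(⟨j',m'-1⟩,⟨i',m'⟩)` is absent from `i`'s view
(proving that `j'` crashed before time `m'`). -/
def RevealedNode {n : ℕ} (A : Adversary n) (j' : Fin n) (m' : ℕ) (i : Fin n) (m : ℕ) :
    Prop :=
  Seen A (j', m') (i, m) ∨
  ∃ (i' : Fin n) (k : ℕ), m' = k + 1 ∧ Seen A (i', k + 1) (i, m) ∧ ¬ A.F k j' i'

/-- Time `k` is revealed to `⟨i,m⟩` if every node `⟨j',k⟩` is revealed to `⟨i,m⟩`. -/
def RevealedTime {n : ℕ} (A : Adversary n) (k : ℕ) (i : Fin n) (m : ℕ) : Prop :=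
  ∀ j', RevealedNode A j' k i m

/-- A hidden path w.r.t. `⟨i,m⟩`: for each `k ≤ m` a node `⟨j_k,k⟩` not revealed to `⟨i,m⟩`. -/
def HiddenPath {n : ℕ} (A : Adversary n) (i : Fin n) (m : ℕ) : Prop :=
  ∃ js : ℕ → Fin n, ∀ k ≤ m, ¬ RevealedNode A (js k) k i m

/-- `not-known(∃0)`: no process active at time `m` knows `∃0`. -/
def notKnown0 {n : ℕ} (t : ℕ) : Adversary n → ℕ → Prop :=
  fun A m => ∀ j, A.Active j m → ¬ Knows t (existsVal false) A j m

/-- A (full-information, deterministic) decision protocol, described by the decision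
status function: `P A i m = some v` iff by time `m` process `i` has decided `v`
in the run determined by adversary `A`. -/
abbrev ProtoDec (n : ℕ) : Type := Adversary n → Fin n → ℕ → Option Bool

/-- Sanity conditions making a decision-status function a protocol: decisions are
irrevocable, and (for active processes) depend only on the local state. -/
def IsProtocol {n : ℕ} (t : ℕ) (P : ProtoDec n) : Prop :=
  (∀ A i m v, P A i m = some v → P A i (m + 1) = some v) ∧
  (∀ A B i m, Valid t A → Valid t B → sameLocal A B i m → P A i m = P B i m)

/-- Process `i` performs the action `decide(v)` at time `m`: it is decided on `v`
at `m` and was undecided before. -/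
def DecidesAt {n : ℕ} (P : ProtoDec n) (A : Adversary n) (i : Fin n) (m : ℕ) (v : Bool) :
    Prop :=
  P A i m = some v ∧ ∀ k < m, P A i k = none

/-- Decision: every correct process eventually decides. -/
def Decision {n : ℕ} (t : ℕ) (P : ProtoDec n) : Prop :=
  ∀ A : Adversary n, Valid t A → ∀ i, ¬ A.Faulty i → ∃ m, P A i m ≠ none

/-- Validity: if all initial values are `v` then correct processes decide `v`. -/
def Validity {n : ℕ} (t : ℕ) (P : ProtoDec n) : Prop :=
  ∀ A : Adversary n, Valid t A → ∀ v : Bool, (∀ j, A.init j = v) →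
    ∀ i m w, ¬ A.Faulty i → P A i m = some w → w = v

/-- Agreement: all correct processes decide on the same value. -/
def Agreement {n : ℕ} (t : ℕ) (P : ProtoDec n) : Prop :=
  ∀ A : Adversary n, Valid t A → ∀ i j m m' v w, ¬ A.Faulty i → ¬ A.Faulty j →
    P A i m = some v → P A j m' = some w → v = w

def ConsensusSolves {n : ℕ} (t : ℕ) (P : ProtoDec n) : Prop :=
  Decision t P ∧ Validity t P ∧ Agreement t P

/-- Uniform Agreement: all processes that decide (faulty or not) decide the same value. -/
def UniformAgreement {n : ℕ} (t : ℕ) (P : ProtoDec n) : Prop :=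
  ∀ A : Adversary n, Valid t A → ∀ i j m m' v w,
    P A i m = some v → P A j m' = some w → v = w

def UniformConsensusSolves {n : ℕ} (t : ℕ) (P : ProtoDec n) : Prop :=
  Decision t P ∧ Validity t P ∧ UniformAgreement t P

/-- `Q` dominates `P`: for every adversary and process, if `i` has decided by time `m`
in `P` then `i` has decided by time `m` in `Q`. -/
def Dominates {n : ℕ} (t : ℕ) (Q P : ProtoDec n) : Prop :=
  ∀ A : Adversary n, Valid t A → ∀ i m, P A i m ≠ none → Q A i m ≠ none

def StrictlyDominates {n : ℕ} (t : ℕ) (Q P : ProtoDec n) : Prop :=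
  Dominates t Q P ∧ ¬ Dominates t P Q

/-- Turn a per-time decision rule into a decision-status function (the first decision
taken is kept forever). -/
def runDec (step : ℕ → Option Bool) : ℕ → Option Bool
  | 0 => step 0
  | m + 1 => (runDec step m).elim (step (m + 1)) some

/-- The protocol `P₀`: decide 0 as soon as `K_i ∃0` holds, otherwise decide 1 at time `t+1`. -/
noncomputable def P0 (n t : ℕ) : ProtoDec n := fun A i =>
  runDec fun m =>
    if Knows t (existsVal false) A i m then some false
    else if m = t + 1 then some true
    else none

/-- The unbeatable protocol `Opt₀`: decide 0 as soon as `K_i ∃0` holds, and decide 1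
as soon as `K_i not-known(∃0)` holds. -/
noncomputable def Opt0 (n t : ℕ) : ProtoDec n := fun A i =>
  runDec fun m =>
    if Knows t (existsVal false) A i m then some false
    else if Knows t (notKnown0 t) A i m then some true
    else none

/-- The number of processes with initial value `false` (0). -/
noncomputable def zeros {n : ℕ} (A : Adversary n) : ℕ :=
  (Finset.univ.filter fun j => A.init j = false).card

/-- The number of processes with initial value `true` (1). -/
noncomputable def ones {n : ℕ} (A : Adversary n) : ℕ :=
  (Finset.univ.filter fun j => A.init j = true).card

/-- The fact `Maj = 0`: at least `n/2` initial values are 0. -/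
def Maj0 (n : ℕ) : Adversary n → ℕ → Prop := fun A _ => n ≤ 2 * zeros A

/-- The fact `Maj = 1`: strictly more than `n/2` initial values are 1. -/
def Maj1 (n : ℕ) : Adversary n → ℕ → Prop := fun A _ => n < 2 * ones A

noncomputable def seenZeros {n : ℕ} (A : Adversary n) (i : Fin n) (m : ℕ) : ℕ :=
  (Finset.univ.filter fun j => Seen A (j, 0) (i, m) ∧ A.init j = false).card

noncomputable def seenOnes {n : ℕ} (A : Adversary n) (i : Fin n) (m : ℕ) : ℕ :=
  (Finset.univ.filter fun j => Seen A (j, 0) (i, m) ∧ A.init j = true).card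

/-- `Maj(vals(i,m))`: 0 if at least half of the initial values known to `i` at `m`
are 0, and 1 otherwise. -/
noncomputable def MajSeen {n : ℕ} (A : Adversary n) (i : Fin n) (m : ℕ) : Bool :=
  if seenOnes A i m ≤ seenZeros A i m then false else true

/-- The unbeatable majority consensus protocol `Opt_Maj`. -/
noncomputable def OptMaj (n t : ℕ) : ProtoDec n := fun A i =>
  runDec fun m =>
    if Knows t (Maj0 n) A i m then some false
    else if Knows t (Maj1 n) A i m then some true
    else if ∃ k ≤ m, RevealedTime A k i m then some (MajSeen A i m)
    else none

/-- The fact `∀1`: all initial values are 1. -/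
def all1 (n : ℕ) : Adversary n → ℕ → Prop := fun A _ => ∀ j, A.init j = true

/-- The sender set of `i` repeats at `⟨i,m⟩`: `i` hears from the same set of processes
in rounds `m-1` and `m` (only meaningful for `m ≥ 2`). -/
def senderSetRepeats {n : ℕ} (A : Adversary n) (i : Fin n) (m : ℕ) : Prop :=
  ∀ j, (A.F (m - 2) j i ↔ A.F (m - 1) j i)

/-- The protocol `P0_opt` of Halpern, Moses and Waarts. -/
noncomputable def P0opt (n t : ℕ) : ProtoDec n := fun A i =>
  runDec fun m =>
    if Knows t (existsVal false) A i m then some false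
    else if Knows t (all1 n) A i m ∨ (2 ≤ m ∧ senderSetRepeats A i m) then some true
    else none

/-- The fact `∃correct(v)`: some correct (never-failing) process knows `∃v`. -/
def ExistsCorrectKnows {n : ℕ} (t : ℕ) (v : Bool) : Adversary n → ℕ → Prop :=
  fun A m => ∃ j, ¬ A.Faulty j ∧ Knows t (existsVal v) A j m

/-- The number `d` of failures process `i` knows of at time `m`: the number of
processes `j ≠ i` from which `i` receives no message in round `m`. -/
noncomputable def knownFaults {n : ℕ} (A : Adversary n) (i : Fin n) : ℕ → ℕ
  | 0 => 0
  | m + 1 => (Finset.univ.filter fun j => j ≠ i ∧ ¬ A.F m j i).card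

/-- The protocol `u-P₀` for uniform consensus: decide 0 as soon as
`K_i ∃correct(0)` holds, otherwise decide 1 at time `t+1`. -/
noncomputable def uP0 (n t : ℕ) : ProtoDec n := fun A i =>
  runDec fun m =>
    if Knows t (ExistsCorrectKnows t false) A i m then some false
    else if m = t + 1 then some true
    else none

/-- The unbeatable uniform consensus protocol `u-Opt₀`. -/
noncomputable def uOpt0 (n t : ℕ) : ProtoDec n := fun A i =>
  runDec fun m =>
    if Knows t (ExistsCorrectKnows t false) A i m then some false
    else if ¬ Knows t (existsVal false) A i m ∧ ∃ k ≤ m, RevealedTime A k i m then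
      some true
    else none

/-- All decisions in the run `P[A]` are taken at or before time `m`. -/
def AllDecidedBy {n : ℕ} (P : ProtoDec n) (A : Adversary n) (m : ℕ) : Prop :=
  ∀ i k, P A i k ≠ none → P A i m ≠ none

/-- `Q` last-decider dominates `P`. -/
def LDDominates {n : ℕ} (t : ℕ) (Q P : ProtoDec n) : Prop :=
  ∀ A : Adversary n, Valid t A → ∀ m, AllDecidedBy P A m → AllDecidedBy Q A m

/-- A 0-chain for `⟨i,m⟩`: distinct processes `j₀,…,j_d = i` with `d ≤ m`, `j₀` having
initial value 0, and `j_k` receiving a message from `j_{k-1}` at time `k` (round `k`). -/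
def ZeroChain {n : ℕ} (A : Adversary n) (i : Fin n) (m : ℕ) : Prop :=
  ∃ d ≤ m, ∃ js : ℕ → Fin n, js d = i ∧
    (∀ k ≤ d, ∀ l ≤ d, js k = js l → k = l) ∧
    A.init (js 0) = false ∧
    ∀ k, 1 ≤ k → k ≤ d → A.F (k - 1) (js (k - 1)) (js k)

/- A node `⟨j_k,k⟩` hidden from `⟨i,m⟩` with `k < m` means that `i` never hears from `j_k` in
rounds `k+1,…,m` (hearing from it would put `⟨j_k,k⟩` into the view), so `j_k` has crashed,
and every later node `⟨j_k,l⟩` is revealed as crashed by the missing edge into `⟨i,l⟩`.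
Hence the processes of a hidden path are faulty and pairwise distinct, so there are at most
`f` of them, and some time `k < f+1` is revealed to any node `⟨i,f+1⟩`. A process `j` that knows
`∃0` has seen a `0` through a chain passing through time `k`; the node of that chain at time `k`
is revealed to `i`, and it cannot be revealed as crashed since the chain continues from it.
So either `i` sees the `0` and knows `∃0`, or it knows that nobody active knows `∃0`. -/

namespace Adversary

variable {n : ℕ} {A : Adversary n} {j : Fin n} {m : ℕ}

lemma F_of_active_succ (h : A.Active j (m + 1)) (i : Fin n) : A.F m j i :=
  A.before_crash m j i h

lemma active_of_F {i : Fin n} (h : A.F m j i) : A.Active j m := by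
  by_contra hc
  exact A.after_crash m j i ((not_lt.mp hc).trans_lt (by exact_mod_cast m.lt_succ_self)) h

lemma Active.of_le {l : ℕ} (h : A.Active j m) (hl : l ≤ m) : A.Active j l :=
  lt_of_le_of_lt (by exact_mod_cast hl) h

lemma active_of_not_faulty (h : ¬ A.Faulty j) : A.Active j m := by
  rw [Faulty, not_not] at h
  simp [Active, h]

end Adversary

namespace Seen

variable {n : ℕ} {A : Adversary n} {p q r : Fin n × ℕ}

lemma trans (h₁ : Seen A p q) (h₂ : Seen A q r) : Seen A p r := by
  induction h₂ with
  | refl => exact h₁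
  | self _ ih => exact ih.self
  | step _ hF ih => exact ih.step hF

lemma of_le (i : Fin n) {k m : ℕ} (h : k ≤ m) : Seen A (i, k) (i, m) := by
  induction m, h using Nat.le_induction with
  | base => exact refl _
  | succ m _ ih => exact ih.self

lemma of_F {j i : Fin n} {k m : ℕ} (hF : A.F k j i) (hm : k < m) : Seen A (j, k) (i, m) :=
  ((refl _).step hF).trans (of_le i hm)

lemma mono {B : Adversary n} (hF : ∀ k j i, A.F k j i → B.F k j i) (h : Seen A p q) :
    Seen B p q := by
  induction h with
  | refl => exact refl _
  | self _ ih => exact ih.self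
  | step _ hf ih => exact ih.step (hF _ _ _ hf)

lemma active (h : Seen A p q) (hq : A.Active q.1 q.2) : A.Active p.1 p.2 := by
  induction h with
  | refl => exact hq
  | @self _ m _ ih => exact ih (hq.of_le m.le_succ)
  | step _ hF ih => exact ih (Adversary.active_of_F hF)

lemma exists_mid (h : Seen A p q) {k : ℕ} (h₁ : p.2 ≤ k) (h₂ : k ≤ q.2) :
    ∃ j, Seen A p (j, k) ∧ Seen A (j, k) q := by
  induction h with
  | refl =>
    obtain rfl : k = p.2 := le_antisymm h₂ h₁
    exact ⟨p.1, refl p, refl p⟩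
  | @self i m h ih =>
    rcases (show k ≤ m + 1 from h₂).eq_or_lt with rfl | hlt
    · exact ⟨i, h.self, refl _⟩
    · obtain ⟨j, s₁, s₂⟩ := ih (Nat.lt_succ_iff.mp hlt)
      exact ⟨j, s₁, s₂.self⟩
  | @step j i m h hF ih =>
    rcases (show k ≤ m + 1 from h₂).eq_or_lt with rfl | hlt
    · exact ⟨i, h.step hF, refl _⟩
    · obtain ⟨j', s₁, s₂⟩ := ih (Nat.lt_succ_iff.mp hlt)
      exact ⟨j', s₁, s₂.step hF⟩

end Seen

section HiddenNodes

variable {n : ℕ} {A : Adversary n} {i j : Fin n} {k m : ℕ}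

lemma not_F_of_not_revealedNode (h : ¬ RevealedNode A j k i m) {l : ℕ} (hkl : k ≤ l)
    (hlm : l < m) : ¬ A.F l j i :=
  fun hF => h (Or.inl ((Seen.of_le j hkl).trans (Seen.of_F hF hlm)))

lemma faulty_of_not_revealedNode (h : ¬ RevealedNode A j k i m) (hkm : k < m) :
    A.Faulty j := by
  by_contra hj
  exact not_F_of_not_revealedNode h le_rfl hkm
    (Adversary.F_of_active_succ (Adversary.active_of_not_faulty hj) i)

lemma revealedNode_of_not_revealedNode_of_lt (h : ¬ RevealedNode A j k i m) {l : ℕ}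
    (hkl : k < l) (hlm : l ≤ m) : RevealedNode A j l i m := by
  obtain ⟨l, rfl⟩ := Nat.exists_eq_add_of_lt hkl
  exact Or.inr ⟨i, k + l, rfl, Seen.of_le i hlm,
    not_F_of_not_revealedNode h (Nat.le_add_right k l) (by omega)⟩

lemma injOn_of_not_revealedNode {js : ℕ → Fin n}
    (hjs : ∀ k < m, ¬ RevealedNode A (js k) k i m) : Set.InjOn js (Set.Iio m) := by
  have hne : ∀ k l, k < l → l < m → js k ≠ js l := fun k l hkl hlm heq =>
    hjs l hlm (heq ▸ revealedNode_of_not_revealedNode_of_lt (hjs k (hkl.trans hlm)) hkl hlm.le)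
  intro k hk l hl heq
  rcases lt_trichotomy k l with hkl | rfl | hlk
  · exact absurd heq (hne k l hkl hl)
  · rfl
  · exact absurd heq.symm (hne l k hlk hk)

lemma le_numFaults_of_not_revealedNode {js : ℕ → Fin n}
    (hjs : ∀ k < m, ¬ RevealedNode A (js k) k i m) : m ≤ A.numFaults := by
  have h := Set.ncard_le_ncard_of_injOn (s := Set.Iio m) (t := {j | A.Faulty j}) js
    (fun k hk => faulty_of_not_revealedNode (hjs k hk) hk) (injOn_of_not_revealedNode hjs)
  rwa [Set.ncard_Iio_nat] at h

lemma exists_revealedTime_lt (hm : A.numFaults < m) : ∃ k < m, RevealedTime A k i m := by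
  by_contra! h
  have hidden : ∀ k, ∃ j, k < m → ¬ RevealedNode A j k i m := fun k => by
    by_cases hk : k < m
    · obtain ⟨j, hj⟩ := not_forall.mp (h k hk)
      exact ⟨j, fun _ => hj⟩
    · exact ⟨i, fun hk' => absurd hk' hk⟩
  choose js hjs using hidden
  exact (le_numFaults_of_not_revealedNode hjs).not_gt hm

end HiddenNodes

section Knowledge

variable {n t : ℕ} {A : Adversary n} {i : Fin n} {m : ℕ}

lemma knows_existsVal_false_of_seen {j : Fin n} (hs : Seen A (j, 0) (i, m))
    (hj : A.init j = false) : Knows t (existsVal false) A i m :=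
  fun _ _ hloc => ⟨j, hloc.2.2.2.1 j hs ▸ hj⟩

lemma exists_seen_of_knows_existsVal_false (hA : Valid t A) (hi : A.Active i m)
    (hK : Knows t (existsVal false) A i m) :
    ∃ j, Seen A (j, 0) (i, m) ∧ A.init j = false := by
  -- Change every initial value outside the view of `⟨i,m⟩` to `1`.
  let B : Adversary n := { A with init := fun j => if Seen A (j, 0) (i, m) then A.init j else true }
  have hview : sameView A B i m :=
    ⟨fun _ => ⟨Seen.mono fun _ _ _ => id, Seen.mono fun _ _ _ => id⟩,
      fun _ hs => (if_pos hs).symm, fun _ _ _ _ => Iff.rfl⟩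
  obtain ⟨j, hj⟩ := hK B hA ⟨hi, hi, hview⟩
  by_cases hs : Seen A (j, 0) (i, m)
  · exact ⟨j, hs, (if_pos hs).symm.trans hj⟩
  · simp [B, hs] at hj

lemma knows_notKnown0_of_revealedTime {k : ℕ} (hkm : k ≤ m) (hk : RevealedTime A k i m)
    (hK0 : ¬ Knows t (existsVal false) A i m) : Knows t (notKnown0 t) A i m := by
  intro B hB ⟨_, _, hseen, hinit, hedge⟩ j hj hKj
  obtain ⟨j₀, hj₀, hval⟩ := exists_seen_of_knows_existsVal_false hB hj hKj
  obtain ⟨j', hj₀j', hj'j⟩ := hj₀.exists_mid (Nat.zero_le k) hkm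
  rcases hk j' with hA | ⟨i', k', rfl, hA, hnF⟩
  · have hj₀A : Seen A (j₀, 0) (i, m) := (hseen _).mpr (hj₀j'.trans ((hseen _).mp hA))
    exact hK0 (knows_existsVal_false_of_seen hj₀A ((hinit j₀ hj₀A).trans hval))
  · exact hnF ((hedge k' j' i' hA).mpr (Adversary.F_of_active_succ (hj'j.active hj) i'))

end Knowledge

lemma runDec_ne_none {step : ℕ → Option Bool} {m : ℕ} (h : step m ≠ none) :
    runDec step m ≠ none := by
  cases m with
  | zero => exact h
  | succ m => cases hr : runDec step m <;> simp [runDec, hr, h]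

lemma opt0_ne_none_of_revealedTime {n t : ℕ} {A : Adversary n} {i : Fin n} {k m : ℕ}
    (hkm : k ≤ m) (hk : RevealedTime A k i m) : Opt0 n t A i m ≠ none := by
  refine runDec_ne_none ?_
  by_cases hK0 : Knows t (existsVal false) A i m
  · simp [hK0]
  · simp [hK0, knows_notKnown0_of_revealedTime hkm hk hK0]

theorem hidden_path_faulty_distinct_and_opt0_stops_by_f_plus_one_general (n t : ℕ) :
    (∀ A : Adversary n, Valid t A → ∀ (i : Fin n) (m : ℕ), A.Active i m →
      ∀ js : ℕ → Fin n, (∀ k < m, ¬ RevealedNode A (js k) k i m) →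
        (∀ k < m, A.Faulty (js k)) ∧
        (∀ k l, k < m → l < m → js k = js l → k = l) ∧
        m ≤ A.numFaults) ∧
    (∀ A : Adversary n, Valid t A → ∀ i : Fin n, A.Active i (A.numFaults + 1) →
      Opt0 n t A i (A.numFaults + 1) ≠ none) := by
  refine ⟨fun A _ i m _ js hjs => ⟨fun k hk => faulty_of_not_revealedNode (hjs k hk) hk,
    fun k l hk hl => injOn_of_not_revealedNode hjs hk hl,
    le_numFaults_of_not_revealedNode hjs⟩, fun A _ i _ => ?_⟩
  obtain ⟨k, hk, hrev⟩ := exists_revealedTime_lt (i := i) (Nat.lt_succ_self A.numFaults)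
  exact opt0_ne_none_of_revealedTime hk.le hrev

/-- A hidden path `⟨j₀,0⟩,…,⟨j_{m-1},m-1⟩` w.r.t. an active node `⟨i,m⟩` consists of `m`
pairwise-distinct faulty processes, so `m ≤ f`; consequently in `Opt₀` all decisions are
made by time `f+1` at the latest. -/
theorem hidden_path_faulty_distinct_and_opt0_stops_by_f_plus_one (n t : ℕ) (ht : t < n) :
    (∀ A : Adversary n, Valid t A → ∀ (i : Fin n) (m : ℕ), A.Active i m →
      ∀ js : ℕ → Fin n, (∀ k < m, ¬ RevealedNode A (js k) k i m) →
        (∀ k < m, A.Faulty (js k)) ∧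
        (∀ k l, k < m → l < m → js k = js l → k = l) ∧
        m ≤ A.numFaults) ∧
    (∀ A : Adversary n, Valid t A → ∀ i : Fin n, A.Active i (A.numFaults + 1) →
      Opt0 n t A i (A.numFaults + 1) ≠ none) :=
  hidden_path_faulty_distinct_and_opt0_stops_by_f_plus_one_general n t
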